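/- arXiv:1204.1228 — 2 statements merged into one kernel-verified Lean document; each statement's English description precedes it below -/
import Mathlib

section
/- Let (G, p) be a quasi-generic complex realisation of a graph G = (V, E) (i.e., congruent to a realisation whose coordinates are algebraically independent over ℚ). If the rows of the rigidity matrix R(G, p) are linearly independent, then the point d_G(p) ∈ ℂ^|E| of squared edge lengths is generic, i.e., its coordinates are algebraically independent over ℚ. -/
/-!
Congruent realisations have the same edge lengths, so `p` may be replaced by the generic
realisation `q`. The squared edge lengths are `f(q)` for quadratic polynomials `fᵢ` whose Jacobian
is twice the rigidity matrix. Independence of the rows at `p` is witnessed by a maximal minor: a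
polynomial in the coordinates that is nonzero at `p`, hence nonzero as a polynomial, hence nonzero
at the generic `q`. Now if `P(f(q)) = 0`, then `P ∘ f` vanishes at the generic point `q`, so it is
the zero polynomial; by the chain rule the gradient of `P` at `f(q)` is a left kernel vector of the
Jacobian at `q`, hence zero. By induction on the degree all partial derivatives of `P` vanish, so
`P` is constant, and then `P = 0`.
-/

/-- The complex quadratic form `d(x, y) = x² + y²` on `ℂ²`. -/
noncomputable def cd (P : Fin 2 → ℂ) : ℂ := (P 0) ^ 2 + (P 1) ^ 2

/-- The rigidity matrix of a realisation `p : V → K²` of a graph with edge list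
`e : Fin m → V × V`: the row of edge `i` has the coordinates of
`p(u) − p(v)` in the columns of `u`, of `p(v) − p(u)` in the columns of `v`
(where `e i = (u, v)`), and zeros elsewhere. -/
def rigidityMatrix {V : Type*} [DecidableEq V] {K : Type*} [Field K] {m : ℕ}
    (e : Fin m → V × V) (p : V → Fin 2 → K) : Matrix (Fin m) (V × Fin 2) K :=
  Matrix.of fun i x =>
    if x.1 = (e i).1 then p (e i).1 x.2 - p (e i).2 x.2
    else if x.1 = (e i).2 then p (e i).2 x.2 - p (e i).1 x.2
    else 0

/-- The rigidity map: the vector of squared complex edge lengths. -/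
noncomputable def edgeLengths {V : Type*} {m : ℕ} (e : Fin m → V × V)
    (p : V → Fin 2 → ℂ) : Fin m → ℂ :=
  fun i => cd (p (e i).1 - p (e i).2)

/-- `p` is quasi-generic if it is congruent to a realisation whose coordinates are
algebraically independent over `ℚ`. -/
def IsQuasiGeneric {V : Type*} (p : V → Fin 2 → ℂ) : Prop :=
  ∃ q : V → Fin 2 → ℂ, (∀ u v : V, cd (p u - p v) = cd (q u - q v)) ∧
    AlgebraicIndependent ℚ (fun x : V × Fin 2 => q x.1 x.2)

open MvPolynomial Function

namespace MvPolynomial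

variable {R σ τ : Type*} [CommRing R]

theorem totalDegree_pderiv_lt {i : σ} {P : MvPolynomial σ R} (h : pderiv i P ≠ 0) :
    (pderiv i P).totalDegree < P.totalDegree := by
  obtain ⟨d, hd, hdeg⟩ := Finset.exists_mem_eq_sup _ (support_nonempty.mpr h)
    fun d => d.sum fun _ e => e
  have hcoeff : coeff (d + Finsupp.single i 1) P ≠ 0 := by
    intro h0
    rw [mem_support_iff, coeff_pderiv, h0, zero_mul] at hd
    exact hd rfl
  calc (pderiv i P).totalDegree = d.sum fun _ e => e := hdeg
    _ < (d + Finsupp.single i 1).sum fun _ e => e := by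
      rw [Finsupp.sum_add_index' (fun _ => rfl) (fun _ _ _ => rfl)]
      simp
    _ ≤ P.totalDegree := le_totalDegree (mem_support_iff.mpr hcoeff)

theorem eq_C_of_forall_pderiv_eq_zero [IsAddTorsionFree R] {P : MvPolynomial σ R}
    (h : ∀ i, pderiv i P = 0) : P = C (P.coeff 0) := by
  rw [← totalDegree_eq_zero_iff_eq_C, totalDegree_eq_zero_iff]
  intro d hd i
  by_contra hdi
  have hsucc : d - Finsupp.single i 1 + Finsupp.single i 1 = d :=
    tsub_add_cancel_of_le (Finsupp.single_le_iff.mpr (Nat.one_le_iff_ne_zero.mpr hdi))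
  have hcoeff := congrArg (coeff (d - Finsupp.single i 1)) (h i)
  rw [coeff_pderiv, hsucc, coeff_zero, ← Nat.cast_succ, mul_comm, ← nsmul_eq_mul,
    nsmul_eq_zero_iff_right (Nat.succ_ne_zero _)] at hcoeff
  exact mem_support_iff.mp hd hcoeff

theorem pderiv_bind₁ [Fintype τ] (f : τ → MvPolynomial σ R) (P : MvPolynomial τ R)
    (j : σ) : pderiv j (bind₁ f P) = ∑ i, bind₁ f (pderiv i P) * pderiv j (f i) := by
  classical
  induction P using MvPolynomial.induction_on with
  | C a => simp
  | add P Q hP hQ => simp only [map_add, hP, hQ, add_mul, Finset.sum_add_distrib]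
  | mul_X P i hP =>
    simp [hP, pderiv_X, Pi.single_apply, Finset.sum_add_distrib, add_mul, apply_ite, ite_mul,
      Finset.mul_sum, mul_assoc]

noncomputable def jacobian {ι : Type*} (f : ι → MvPolynomial σ R) :
    Matrix ι σ (MvPolynomial σ R) :=
  Matrix.of fun i j => pderiv j (f i)

end MvPolynomial

theorem algebraicIndependent_aeval_of_linearIndependent_jacobian
    {k K σ ι : Type*} [CommRing k] [IsAddTorsionFree k] [CommRing K] [Algebra k K] [Fintype ι]
    {x : σ → K} (hx : AlgebraicIndependent k x) {f : ι → MvPolynomial σ k}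
    (hJ : LinearIndependent K ((jacobian f).map (aeval x)).row) :
    AlgebraicIndependent k fun i => aeval x (f i) := by
  have hpderiv : ∀ P : MvPolynomial ι k, aeval (fun i => aeval x (f i)) P = 0 →
      ∀ i, aeval (fun i => aeval x (f i)) (pderiv i P) = 0 := by
    intro P hP
    have hcomp : bind₁ f P = 0 := hx.eq_zero_of_aeval_eq_zero _ (by rwa [aeval_bind₁])
    refine Fintype.linearIndependent_iff.mp hJ _ (funext fun j => ?_)
    simpa [pderiv_bind₁, aeval_bind₁, Finset.sum_apply, jacobian, Matrix.row] using
      congrArg (aeval x ∘ pderiv j) hcomp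
  rw [algebraicIndependent_iff]
  intro P hP
  induction hn : P.totalDegree using Nat.strong_induction_on generalizing P with
  | _ n ih =>
  have hconst : ∀ i, pderiv i P = 0 := fun i => by
    by_contra hne
    exact hne (ih _ (hn ▸ totalDegree_pderiv_lt hne) _ (hpderiv P hP i) rfl)
  rw [eq_C_of_forall_pderiv_eq_zero hconst] at hP ⊢
  rw [aeval_C] at hP
  simpa using hx.eq_zero_of_aeval_eq_zero (C (P.coeff 0)) (by rwa [aeval_C])

theorem Matrix.exists_isUnit_submatrix_of_linearIndependent_row {K ι κ : Type*} [Field K]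
    [Fintype ι] [DecidableEq ι] [Fintype κ] {A : Matrix ι κ K}
    (h : LinearIndependent K A.row) :
    ∃ g : ι → κ, IsUnit (A.submatrix id g) := by
  have hspan : Submodule.span K (Set.range A.col) = ⊤ := by
    apply Submodule.eq_top_of_finrank_eq
    rw [← rank_eq_finrank_span_cols, h.rank_matrix, Module.finrank_fintype_fun_eq_card]
  obtain ⟨κ', a, -, hsp, hli⟩ := exists_linearIndependent' K A.col
  let B := Module.Basis.mk hli (by rw [hsp, hspan])
  let eqv : ι ≃ κ' := (B.indexEquiv (Pi.basisFun K ι)).symm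
  refine ⟨a ∘ eqv, ?_⟩
  rw [← linearIndependent_cols_iff_isUnit]
  exact hli.comp eqv eqv.injective

theorem linearIndependent_row_map_aeval_of_algebraicIndependent
    {k K L σ ι κ : Type*} [CommRing k] [Field K] [Field L] [Algebra k K] [Algebra k L]
    [Fintype ι] [Fintype κ] {M : Matrix ι κ (MvPolynomial σ k)} {p : σ → L} {q : σ → K}
    (hq : AlgebraicIndependent k q) (hp : LinearIndependent L (M.map (aeval p)).row) :
    LinearIndependent K (M.map (aeval q)).row := by
  classical
  obtain ⟨g, hg⟩ := Matrix.exists_isUnit_submatrix_of_linearIndependent_row hp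
  have hminor : (M.submatrix id g).det ≠ 0 := by
    rw [Matrix.isUnit_iff_isUnit_det, isUnit_iff_ne_zero] at hg
    exact fun h0 => hg (((aeval p).map_det (M.submatrix id g)).symm.trans (by rw [h0, map_zero]))
  have hq_minor : IsUnit ((M.map (aeval q)).submatrix id g) := by
    rw [Matrix.isUnit_iff_isUnit_det, isUnit_iff_ne_zero]
    exact ((aeval q).map_det _).symm.trans_ne
      fun h0 => hminor (hq.eq_zero_of_aeval_eq_zero _ h0)
  exact (Matrix.linearIndependent_rows_iff_isUnit.mpr hq_minor).of_comp (LinearMap.funLeft K K g)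

section Rigidity

variable {V : Type*} {m : ℕ}

noncomputable def edgeLengthPoly (R : Type*) [CommRing R] (e : Fin m → V × V) (i : Fin m) :
    MvPolynomial (V × Fin 2) R :=
  (X ((e i).1, 0) - X ((e i).2, 0)) ^ 2 + (X ((e i).1, 1) - X ((e i).2, 1)) ^ 2

variable {R : Type*} [CommRing R] [Algebra R ℂ] (e : Fin m → V × V) (p : V → Fin 2 → ℂ)

theorem aeval_edgeLengthPoly (i : Fin m) :
    aeval (uncurry p) (edgeLengthPoly R e i) = edgeLengths e p i := by
  simp [edgeLengthPoly, edgeLengths, cd]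

theorem map_aeval_jacobian_edgeLengthPoly [DecidableEq V] :
    (jacobian (edgeLengthPoly R e)).map (aeval (uncurry p)) = 2 • rigidityMatrix e p := by
  ext i ⟨w, k⟩
  simp only [jacobian, edgeLengthPoly, rigidityMatrix, Matrix.map_apply, Matrix.of_apply,
    Matrix.smul_apply, map_add, pderiv_pow, map_sub, pderiv_X]
  by_cases hw1 : w = (e i).1 <;> by_cases hw2 : w = (e i).2 <;> fin_cases k <;>
    simp_all [Prod.ext_iff] <;> ring

end Rigidity

theorem edgeLengths_generic_of_quasiGeneric_general {V : Type*} [Fintype V] [DecidableEq V]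
    {m : ℕ} (e : Fin m → V × V)
    (p : V → Fin 2 → ℂ) (hqg : IsQuasiGeneric p)
    (hrows : LinearIndependent ℂ (fun i => rigidityMatrix e p i)) :
    AlgebraicIndependent ℚ (edgeLengths e p) := by
  obtain ⟨q, hcong, hq⟩ := hqg
  have hJp :
      LinearIndependent ℂ ((jacobian (edgeLengthPoly ℚ e)).map (aeval (uncurry p))).row := by
    rw [map_aeval_jacobian_edgeLengthPoly]
    convert hrows.units_smul fun _ => Units.mk0 (2 : ℂ) two_ne_zero using 1
    ext i x
    simp [Units.smul_def]
  have hJq := linearIndependent_row_map_aeval_of_algebraicIndependent (q := uncurry q) hq hJp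
  have hedge : edgeLengths e p = edgeLengths e q := funext fun i => hcong _ _
  rw [hedge, ← funext (aeval_edgeLengthPoly (R := ℚ) e q)]
  exact algebraicIndependent_aeval_of_linearIndependent_jacobian hq hJq

/-- If `(G, p)` is a quasi-generic complex realisation of a graph `G` and the rows of
the rigidity matrix `R(G, p)` are linearly independent, then the vector of squared edge
lengths `d_G(p)` is generic (its coordinates are algebraically independent over `ℚ`). -/
theorem edgeLengths_generic_of_quasiGeneric {V : Type*} [Fintype V] [DecidableEq V]
    {m : ℕ} (e : Fin m → V × V) (hloop : ∀ i, (e i).1 ≠ (e i).2)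
    (p : V → Fin 2 → ℂ) (hqg : IsQuasiGeneric p)
    (hrows : LinearIndependent ℂ (fun i => rigidityMatrix e p i)) :
    AlgebraicIndependent ℚ (edgeLengths e p) :=
  edgeLengths_generic_of_quasiGeneric_general e p hqg hrows
end

section
/- Let G be a rigid graph with G = G₁ ∪ G₂ ∪ {e₁, e₂, e₃}, where V(G₁) ∩ V(G₂) = ∅ and e₁, e₂, e₃ are three edges each joining a distinct vertex of G₁ to a distinct vertex of G₂. Let F be a spanning isostatic subgraph of G. Then {e₁, e₂, e₃} ⊆ E(F), |E(F) ∩ E(Gᵢ)| = 2|V(Gᵢ)| − 3 for i = 1, 2, and consequently G₁ and G₂ are both rigid. -/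
/-!
Fix a realisation in which the rows of `F` span a space of dimension `2|V| − 3 = |E(F)|`; these
rows are then independent, so every set of edges of `F` has rank equal to its size. Every row is
orthogonal to the three trivial motions (two translations and a rotation), so `F` has at most
`2|V(Gᵢ)| − 3` edges inside `Gᵢ`, and at most three across the cut. Since
`|V| = |V(G₁)| + |V(G₂)|`, the total `2|V| − 3` forces equality in each bound; equality for `Gᵢ`
says that the same realisation makes `Gᵢ` rigid.
-/
/-- The rigidity-matrix row vector associated to a pair `u, v` in a real realisation. -/
def rigidityVec {W : Type*} [DecidableEq W] (p : W → Fin 2 → ℝ) (u v : W) :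
    W × Fin 2 → ℝ :=
  fun x => if x.1 = u then p u x.2 - p v x.2
    else if x.1 = v then p v x.2 - p u x.2 else 0

/-- A graph is rigid (in `ℝ²`) if the rows of the rigidity matrix of some (equivalently,
any generic) real realisation span a space of dimension `2|W| − 3`. -/
def GraphRigid {W : Type*} [DecidableEq W] (G : SimpleGraph W) : Prop :=
  ∃ p : W → Fin 2 → ℝ,
    Module.finrank ℝ (Submodule.span ℝ
      {w : W × Fin 2 → ℝ | ∃ u v : W, G.Adj u v ∧ w = rigidityVec p u v})
      = 2 * Nat.card W - 3

open Module Submodule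

section RigidityRank

variable {W : Type*} [DecidableEq W]

lemma rigidityVec_comm (p : W → Fin 2 → ℝ) (u v : W) :
    rigidityVec p u v = rigidityVec p v u := by
  ext ⟨z, k⟩
  by_cases hu : z = u <;> by_cases hv : z = v <;> simp_all [rigidityVec]

def edgeRow (p : W → Fin 2 → ℝ) : Sym2 W → W × Fin 2 → ℝ :=
  Sym2.lift ⟨rigidityVec p, rigidityVec_comm p⟩

lemma setOf_rigidityVec_eq_image (G : SimpleGraph W) (p : W → Fin 2 → ℝ) :
    {w | ∃ u v, G.Adj u v ∧ w = rigidityVec p u v} = edgeRow p '' G.edgeSet := by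
  ext w
  constructor
  · rintro ⟨u, v, huv, rfl⟩
    exact ⟨s(u, v), huv, rfl⟩
  · rintro ⟨e, he, rfl⟩
    induction e using Sym2.ind with
    | _ u v => exact ⟨u, v, he, rfl⟩

noncomputable def rigidityRank (p : W → Fin 2 → ℝ) (E : Set (Sym2 W)) : ℕ :=
  finrank ℝ (span ℝ (edgeRow p '' E))

lemma graphRigid_iff (G : SimpleGraph W) :
    GraphRigid G ↔ ∃ p, rigidityRank p G.edgeSet = 2 * Nat.card W - 3 := by
  refine exists_congr fun p => ?_
  rw [rigidityRank, ← setOf_rigidityVec_eq_image]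

variable [Finite W]

lemma rigidityRank_mono (p : W → Fin 2 → ℝ) {E E' : Set (Sym2 W)} (h : E ⊆ E') :
    rigidityRank p E ≤ rigidityRank p E' :=
  Submodule.finrank_mono (span_mono (Set.image_mono h))

lemma rigidityRank_union_le (p : W → Fin 2 → ℝ) (E E' : Set (Sym2 W)) :
    rigidityRank p (E ∪ E') ≤ rigidityRank p E + rigidityRank p E' := by
  rw [rigidityRank, Set.image_union, span_union]
  exact finrank_add_le_finrank_add_finrank _ _

lemma rigidityRank_le_ncard (p : W → Fin 2 → ℝ) (E : Set (Sym2 W)) :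
    rigidityRank p E ≤ E.ncard := by
  have := Fintype.ofFinite (edgeRow p '' E)
  calc rigidityRank p E ≤ (edgeRow p '' E).toFinset.card := finrank_span_le_card _
    _ = (edgeRow p '' E).ncard := (Set.ncard_eq_toFinset_card' _).symm
    _ ≤ E.ncard := Set.ncard_image_le (Set.toFinite E)

lemma rigidityRank_eq_ncard_of_subset (p : W → Fin 2 → ℝ) {E S : Set (Sym2 W)}
    (hE : rigidityRank p E = E.ncard) (hS : S ⊆ E) : rigidityRank p S = S.ncard := by
  have hsplit := rigidityRank_union_le p S (E \ S)
  rw [Set.union_sdiff_cancel hS, hE, ← Set.ncard_sdiff_add_ncard_of_subset hS] at hsplit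
  have := rigidityRank_le_ncard p S
  have := rigidityRank_le_ncard p (E \ S)
  omega

lemma ncard_inter_le_rigidityRank (p : W → Fin 2 → ℝ) {E : Set (Sym2 W)}
    (hE : rigidityRank p E = E.ncard) (E' : Set (Sym2 W)) :
    (E ∩ E').ncard ≤ rigidityRank p E' :=
  (rigidityRank_eq_ncard_of_subset p hE Set.inter_subset_left).symm.le.trans
    (rigidityRank_mono p Set.inter_subset_right)

end RigidityRank

section TrivialMotions

variable {W : Type*}

/-- The velocity fields of the rigid motions of the plane: two translations and the rotation
about the origin. -/
def trivialMotion (p : W → Fin 2 → ℝ) (i : Fin 3) (t : W × Fin 2) : ℝ :=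
  ![![1, 0], ![0, 1], ![-p t.1 1, p t.1 0]] i t.2

lemma linearIndependent_trivialMotion {p : W → Fin 2 → ℝ} {x y : W} (hxy : p x ≠ p y) :
    LinearIndependent ℝ (trivialMotion p) := by
  rw [Fintype.linearIndependent_iff]
  intro g hg
  have hcoord (z : W) (k : Fin 2) := congrFun hg (z, k)
  have hx0 : g 0 - g 2 * p x 1 = 0 := by
    simpa [trivialMotion, Fin.sum_univ_three, sub_eq_add_neg] using hcoord x 0
  have hx1 : g 1 + g 2 * p x 0 = 0 := by simpa [trivialMotion, Fin.sum_univ_three] using hcoord x 1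
  have hy0 : g 0 - g 2 * p y 1 = 0 := by
    simpa [trivialMotion, Fin.sum_univ_three, sub_eq_add_neg] using hcoord y 0
  have hy1 : g 1 + g 2 * p y 0 = 0 := by simpa [trivialMotion, Fin.sum_univ_three] using hcoord y 1
  have hg2 : g 2 = 0 := by
    by_contra hg2
    refine hxy (funext (Fin.forall_fin_two.2 ⟨?_, ?_⟩))
    · exact mul_left_cancel₀ hg2 (by linear_combination hx1 - hy1)
    · exact mul_left_cancel₀ hg2 (by linear_combination hy0 - hx0)
  intro i
  fin_cases i
  · simpa [hg2] using hx0
  · simpa [hg2] using hx1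
  · exact hg2

variable [DecidableEq W] [Fintype W]

lemma rigidityVec_dotProduct (p : W → Fin 2 → ℝ) (u v : W) (w : W × Fin 2 → ℝ) :
    rigidityVec p u v ⬝ᵥ w = ∑ k, (p u k - p v k) * (w (u, k) - w (v, k)) := by
  by_cases huv : u = v
  · subst huv
    simp [rigidityVec, dotProduct]
  rw [dotProduct, Fintype.sum_prod_type, Finset.sum_eq_add u v huv
    (fun z _ hz => by simp [rigidityVec, hz.1, hz.2]) (by simp) (by simp),
    ← Finset.sum_add_distrib]
  refine Finset.sum_congr rfl fun k _ => ?_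
  simp only [rigidityVec, ↓reduceIte, Ne.symm huv]
  ring

lemma rigidityVec_dotProduct_trivialMotion (p : W → Fin 2 → ℝ) (u v : W) (i : Fin 3) :
    rigidityVec p u v ⬝ᵥ trivialMotion p i = 0 := by
  rw [rigidityVec_dotProduct]
  fin_cases i
  · simp [trivialMotion]
  · simp [trivialMotion]
  · simp only [trivialMotion, Fin.isValue, Fin.reduceFinMk, Matrix.cons_val', Matrix.cons_val_fin_one,
      Matrix.cons_val, Matrix.cons_val_one, Fin.sum_univ_two, Matrix.cons_val_zero]
    ring

/-- Every row lies in the kernel of the matrix of trivial motions, which has rank `3` unless `p`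
is constant, in which case all rows vanish. -/
lemma rigidityRank_le (p : W → Fin 2 → ℝ) (E : Set (Sym2 W)) :
    rigidityRank p E ≤ 2 * Fintype.card W - 3 := by
  by_cases hconst : ∀ x y, p x = p y
  · have hrows : span ℝ (edgeRow p '' E) = ⊥ := by
      refine span_eq_bot.2 ?_
      rintro _ ⟨e, -, rfl⟩
      induction e using Sym2.ind with
      | _ u v =>
        ext ⟨z, k⟩
        simp [edgeRow, rigidityVec, hconst u v]
    rw [rigidityRank, hrows, finrank_bot]
    exact Nat.zero_le _
  push Not at hconst
  obtain ⟨x, y, hxy⟩ := hconst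
  set M : Matrix (Fin 3) (W × Fin 2) ℝ := Matrix.of (trivialMotion p)
  have hrank : M.rank = 3 := by
    rw [Matrix.rank_eq_finrank_span_row]
    change finrank ℝ (span ℝ (Set.range (trivialMotion p))) = 3
    rw [finrank_span_eq_card (linearIndependent_trivialMotion hxy)]
    simp
  have hker : finrank ℝ (LinearMap.ker M.mulVecLin) = 2 * Fintype.card W - 3 := by
    have := LinearMap.finrank_range_add_finrank_ker M.mulVecLin
    rw [← Matrix.rank, hrank, finrank_fintype_fun_eq_card, Fintype.card_prod] at this
    simp only [Fintype.card_fin] at this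
    omega
  rw [← hker]
  refine Submodule.finrank_mono (span_le.2 ?_)
  rintro _ ⟨e, -, rfl⟩
  induction e using Sym2.ind with
  | _ u v =>
    ext i
    simp [M, Matrix.mulVec, dotProduct_comm, edgeRow, rigidityVec_dotProduct_trivialMotion]

end TrivialMotions

section ExtendByZero

variable {V : Type*}

open Classical in
noncomputable def extendByZero (s : Set V) : (s × Fin 2 → ℝ) →ₗ[ℝ] V × Fin 2 → ℝ where
  toFun w t := if h : t.1 ∈ s then w (⟨t.1, h⟩, t.2) else 0
  map_add' w w' := by
    ext t
    by_cases h : t.1 ∈ s <;> simp [h]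
  map_smul' c w := by
    ext t
    by_cases h : t.1 ∈ s <;> simp [h]

lemma extendByZero_injective (s : Set V) : Function.Injective (extendByZero s) := by
  intro w w' h
  ext ⟨a, k⟩
  simpa [extendByZero, a.2] using congrFun h (a.1, k)

variable [DecidableEq V]

lemma extendByZero_rigidityVec (s : Set V) (q : V → Fin 2 → ℝ) (a b : s) :
    extendByZero s (rigidityVec (fun x : s => q x) a b) = rigidityVec q a b := by
  ext ⟨z, k⟩
  by_cases hz : z ∈ s
  · simp [extendByZero, hz, rigidityVec, Subtype.ext_iff]
  · have ha : z ≠ a := fun h => hz (h ▸ a.2)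
    have hb : z ≠ b := fun h => hz (h ▸ b.2)
    simp [extendByZero, hz, rigidityVec, ha, hb]

end ExtendByZero

namespace SimpleGraph.Subgraph

variable {V : Type*} [DecidableEq V] {G : SimpleGraph V}

lemma rigidityRank_coe [Finite V] (H : G.Subgraph) (q : V → Fin 2 → ℝ) :
    rigidityRank (fun x : H.verts => q x) H.coe.edgeSet = rigidityRank q H.edgeSet := by
  have himage : extendByZero H.verts ''
      {w | ∃ a b, H.coe.Adj a b ∧ w = rigidityVec (fun x : H.verts => q x) a b} =
      {w | ∃ x y, H.spanningCoe.Adj x y ∧ w = rigidityVec q x y} := by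
    ext w
    constructor
    · rintro ⟨_, ⟨a, b, hab, rfl⟩, rfl⟩
      exact ⟨a, b, hab, extendByZero_rigidityVec ..⟩
    · rintro ⟨x, y, hxy, rfl⟩
      exact ⟨_, ⟨⟨x, H.edge_vert hxy⟩, ⟨y, H.edge_vert hxy.symm⟩, hxy, rfl⟩,
        extendByZero_rigidityVec ..⟩
  rw [rigidityRank, rigidityRank, ← setOf_rigidityVec_eq_image, ← H.edgeSet_spanningCoe,
    ← setOf_rigidityVec_eq_image, ← himage, span_image]
  exact (equivMapOfInjective _ (extendByZero_injective _) _).finrank_eq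

lemma rigidityRank_edgeSet_le [Finite V] (H : G.Subgraph) (q : V → Fin 2 → ℝ) :
    rigidityRank q H.edgeSet ≤ 2 * H.verts.ncard - 3 := by
  have := Fintype.ofFinite H.verts
  rw [← rigidityRank_coe, ← Nat.card_coe_set_eq, Nat.card_eq_fintype_card]
  exact rigidityRank_le _ _

lemma graphRigid_coe_iff [Finite V] (H : G.Subgraph) :
    GraphRigid H.coe ↔ ∃ q : V → Fin 2 → ℝ, rigidityRank q H.edgeSet = 2 * H.verts.ncard - 3 := by
  rw [graphRigid_iff, Nat.card_coe_set_eq]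
  constructor
  · rintro ⟨p, hp⟩
    refine ⟨Function.extend Subtype.val p 0, ?_⟩
    rwa [← rigidityRank_coe, funext (Subtype.val_injective.extend_apply p 0)]
  · rintro ⟨q, hq⟩
    exact ⟨_, (rigidityRank_coe H q).trans hq⟩

end SimpleGraph.Subgraph

theorem three_edge_cut_isostatic_count_general {V : Type*} [Fintype V] [DecidableEq V]
    (G : SimpleGraph V) (G₁ G₂ : G.Subgraph)
    (hvdisj : Disjoint G₁.verts G₂.verts)
    (hvcover : G₁.verts ∪ G₂.verts = Set.univ)
    (u v : Fin 3 → V) (hu : ∀ i, u i ∈ G₁.verts) (hv : ∀ i, v i ∈ G₂.verts)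
    (huinj : Function.Injective u) (hvinj : Function.Injective v)
    (hedges : G.edgeSet = G₁.edgeSet ∪ G₂.edgeSet ∪ Set.range (fun i => s(u i, v i)))
    (F : G.Subgraph) (hFspan : F.verts = Set.univ)
    (hFrigid : GraphRigid F.coe)
    (hFiso : F.edgeSet.ncard = 2 * Fintype.card V - 3) :
    (∀ i, s(u i, v i) ∈ F.edgeSet) ∧
      (F.edgeSet ∩ G₁.edgeSet).ncard = 2 * G₁.verts.ncard - 3 ∧
      (F.edgeSet ∩ G₂.edgeSet).ncard = 2 * G₂.verts.ncard - 3 ∧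
      GraphRigid G₁.coe ∧ GraphRigid G₂.coe := by
  obtain ⟨q, hq⟩ := F.graphRigid_coe_iff.1 hFrigid
  rw [hFspan, Set.ncard_univ, Nat.card_eq_fintype_card, ← hFiso] at hq
  set E₃ := Set.range fun i => s(u i, v i)
  have hcard : F.edgeSet.ncard ≤
      (F.edgeSet ∩ G₁.edgeSet).ncard + (F.edgeSet ∩ G₂.edgeSet).ncard + (F.edgeSet ∩ E₃).ncard :=
    calc F.edgeSet.ncard
        = (F.edgeSet ∩ G₁.edgeSet ∪ F.edgeSet ∩ G₂.edgeSet ∪ F.edgeSet ∩ E₃).ncard := by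
          rw [← Set.inter_union_distrib_left, ← Set.inter_union_distrib_left, ← hedges,
            Set.inter_eq_left.2 F.edgeSet_subset]
      _ ≤ _ := (Set.ncard_union_le _ _).trans (Nat.add_le_add_right (Set.ncard_union_le _ _) _)
  have hn : Fintype.card V = G₁.verts.ncard + G₂.verts.ncard := by
    rw [← Set.ncard_union_eq hvdisj, hvcover, Set.ncard_univ, Nat.card_eq_fintype_card]
  have hn₁ : 3 ≤ G₁.verts.ncard := by
    simpa using Set.ncard_le_ncard_of_injOn u (fun i _ => hu i) (huinj.injOn (s := Set.univ))
  have hn₂ : 3 ≤ G₂.verts.ncard := by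
    simpa using Set.ncard_le_ncard_of_injOn v (fun i _ => hv i) (hvinj.injOn (s := Set.univ))
  have hE₃ : E₃.ncard ≤ 3 := by
    simpa using (Nat.card_coe_set_eq E₃).symm.trans_le (Finite.card_range_le _)
  have h₁ := ncard_inter_le_rigidityRank q hq G₁.edgeSet
  have h₂ := ncard_inter_le_rigidityRank q hq G₂.edgeSet
  have h₁' := G₁.rigidityRank_edgeSet_le q
  have h₂' := G₂.rigidityRank_edgeSet_le q
  have hcut := Set.ncard_le_ncard (Set.inter_subset_right : F.edgeSet ∩ E₃ ⊆ E₃)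
  have hE₃F : F.edgeSet ∩ E₃ = E₃ :=
    Set.eq_of_subset_of_ncard_le Set.inter_subset_right (by omega)
  exact ⟨fun i => (Set.inter_eq_right.1 hE₃F ⟨i, rfl⟩), by omega, by omega,
    G₁.graphRigid_coe_iff.2 ⟨q, by omega⟩, G₂.graphRigid_coe_iff.2 ⟨q, by omega⟩⟩

/-- Let `G` be a rigid graph which is the union of vertex-disjoint subgraphs `G₁, G₂`
together with three edges `eᵢ = uᵢvᵢ` joining distinct vertices `u₀,u₁,u₂` of `G₁` to
distinct vertices `v₀,v₁,v₂` of `G₂`, and let `F` be a spanning isostatic subgraph of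
`G`.  Then `e₁, e₂, e₃ ∈ E(F)`, `|E(F) ∩ E(Gᵢ)| = 2|V(Gᵢ)| − 3` for `i = 1, 2`, and
consequently `G₁` and `G₂` are both rigid. -/
theorem three_edge_cut_isostatic_count {V : Type*} [Fintype V] [DecidableEq V]
    (G : SimpleGraph V) (G₁ G₂ : G.Subgraph)
    (hvdisj : Disjoint G₁.verts G₂.verts)
    (hvcover : G₁.verts ∪ G₂.verts = Set.univ)
    (u v : Fin 3 → V) (hu : ∀ i, u i ∈ G₁.verts) (hv : ∀ i, v i ∈ G₂.verts)
    (huinj : Function.Injective u) (hvinj : Function.Injective v)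
    (hedges : G.edgeSet = G₁.edgeSet ∪ G₂.edgeSet ∪ Set.range (fun i => s(u i, v i)))
    (hGrigid : GraphRigid G)
    (F : G.Subgraph) (hFspan : F.verts = Set.univ)
    (hFrigid : GraphRigid F.coe)
    (hFiso : F.edgeSet.ncard = 2 * Fintype.card V - 3) :
    (∀ i, s(u i, v i) ∈ F.edgeSet) ∧
      (F.edgeSet ∩ G₁.edgeSet).ncard = 2 * G₁.verts.ncard - 3 ∧
      (F.edgeSet ∩ G₂.edgeSet).ncard = 2 * G₂.verts.ncard - 3 ∧
      GraphRigid G₁.coe ∧ GraphRigid G₂.coe :=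
  three_edge_cut_isostatic_count_general G G₁ G₂ hvdisj hvcover u v hu hv huinj hvinj hedges F
    hFspan hFrigid hFiso
end
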